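/- If the step size satisfies 0 < η < 1/(L(1 + 2√p·s)), then Σ_{t=0}^{∞} ‖x(t+1) − x(t)‖^2 ≤ (2/(1/η − L − 2√p·L·s)) · (F(x(0)) − inf_{z ∈ E} F(z)). -/

import Mathlib

/-!
Write `Δ(t) = x(t+1) - x(t)`. Comparing the proximal objective of an update with its value at
the old point gives `g_i(x_i(t+1)) + ‖Δ_i(t)‖² / (2η) + ⟪Δ_i(t), ∇_i f(x^i(t))⟫ ≤ g_i(x_i(t))`.
Adding the descent lemma for `f`, the potential `F(x(t))` decreases by `(1/(2η) - L/2) ‖Δ(t)‖²`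
up to the error `Σ_i ⟪∇_i f(x(t)) - ∇_i f(x^i(t)), Δ_i(t)⟫`. Each local model lags `x(t)` by at
most `s` steps, so the error is at most `√p L ‖Δ(t)‖ Σ_{t-s ≤ k < t} ‖Δ(k)‖`; by AM-GM and since
every `k` lies in at most `s` such windows, the total error over `t < n` is at most
`√p L s Σ_t ‖Δ(t)‖²`. Telescoping then bounds `(1/(2η) - L/2 - √p L s) Σ_t ‖Δ(t)‖²` by
`F(x(0)) - inf F`.
-/

open Filter Topology
open scoped InnerProductSpace

noncomputable abbrev EE (p : ℕ) (d : Fin p → ℕ) : Type :=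
  PiLp 2 (fun i : Fin p => EuclideanSpace ℝ (Fin (d i)))

theorem le_add_inner_add_sq_of_lipschitz_gradient {E : Type*} [NormedAddCommGroup E]
    [InnerProductSpace ℝ E] [CompleteSpace E] {f : E → ℝ} {f' : E → E} {L : ℝ}
    (hf : ∀ y, HasGradientAt f (f' y) y) (hlip : ∀ y z, ‖f' y - f' z‖ ≤ L * ‖y - z‖)
    (a b : E) :
    f b ≤ f a + ⟪f' a, b - a⟫_ℝ + L / 2 * ‖b - a‖ ^ 2 := by
  set v := b - a
  let h : ℝ → ℝ := fun u => f (a + u • v) - u * ⟪f' a, v⟫_ℝ - L / 2 * u ^ 2 * ‖v‖ ^ 2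
  let h' : ℝ → ℝ := fun u => ⟪f' (a + u • v) - f' a, v⟫_ℝ - L * u * ‖v‖ ^ 2
  have hderiv : ∀ u, HasDerivAt h (h' u) u := by
    intro u
    have hcurve : HasDerivAt (fun u : ℝ => a + u • v) v u := by
      simpa using ((hasDerivAt_id u).smul_const v).const_add a
    have hfu := ((hf (a + u • v)).hasFDerivAt.comp_hasDerivAt u hcurve)
    have := ((hfu.sub ((hasDerivAt_id u).mul_const ⟪f' a, v⟫_ℝ)).sub
      (((hasDerivAt_pow 2 u).const_mul (L / 2)).mul_const (‖v‖ ^ 2)))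
    refine this.congr_deriv ?_
    simp only [h', inner_sub_left, InnerProductSpace.toDual_apply_apply]
    ring
  have hanti : AntitoneOn h (Set.Icc 0 1) := by
    refine antitoneOn_of_hasDerivWithinAt_nonpos (convex_Icc 0 1)
      (fun u _ => (hderiv u).continuousAt.continuousWithinAt)
      (fun u _ => (hderiv u).hasDerivWithinAt) fun u hu => ?_
    rw [interior_Icc] at hu
    have hlip_u : ‖f' (a + u • v) - f' a‖ ≤ L * (u * ‖v‖) := by
      simpa [norm_smul, abs_of_pos hu.1] using hlip (a + u • v) a
    have := real_inner_le_norm (f' (a + u • v) - f' a) v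
    nlinarith [norm_nonneg v]
  have h0 : h 0 = f a := by simp [h]
  have h1 : h 1 = f b - ⟪f' a, v⟫_ℝ - L / 2 * ‖v‖ ^ 2 := by simp [h, v]
  linarith [hanti (by simp) (by simp) zero_le_one]

theorem sum_range_sum_Ico_sub_le {b : ℕ → ℝ} (hb : ∀ k, 0 ≤ b k) (s n : ℕ) :
    ∑ t ∈ Finset.range n, ∑ k ∈ Finset.Ico (t - s) t, b k ≤
      s * ∑ t ∈ Finset.range n, b t := by
  rw [Finset.sum_comm' (t' := Finset.range n)
    (s' := fun k => (Finset.range n).filter fun t => k < t ∧ t ≤ k + s) (fun t k => by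
      simp only [Finset.mem_range, Finset.mem_Ico, Finset.mem_filter]; omega), Finset.mul_sum]
  refine Finset.sum_le_sum fun k _ => ?_
  rw [Finset.sum_const, nsmul_eq_mul]
  refine mul_le_mul_of_nonneg_right ?_ (hb k)
  have hcard : ((Finset.range n).filter fun t => k < t ∧ t ≤ k + s).card ≤ s :=
    calc _ ≤ (Finset.Ioc k (k + s)).card := Finset.card_le_card fun t ht => by
          simp only [Finset.mem_filter, Finset.mem_Ioc] at ht ⊢; exact ht.2
      _ = s := by simp
  exact_mod_cast hcard

theorem sum_range_sum_Ico_sub_mul_le (a : ℕ → ℝ) (s n : ℕ) :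
    ∑ t ∈ Finset.range n, (∑ k ∈ Finset.Ico (t - s) t, a k) * a t ≤
      s * ∑ t ∈ Finset.range n, a t ^ 2 := by
  have hamgm : ∀ t, (∑ k ∈ Finset.Ico (t - s) t, a k) * a t ≤
      ∑ k ∈ Finset.Ico (t - s) t, a k ^ 2 / 2 + s * (a t ^ 2 / 2) := by
    intro t
    have hcard : ((Finset.Ico (t - s) t).card : ℝ) ≤ s := by
      rw [Nat.card_Ico]; exact_mod_cast (by omega : t - (t - s) ≤ s)
    calc (∑ k ∈ Finset.Ico (t - s) t, a k) * a t
        ≤ ∑ k ∈ Finset.Ico (t - s) t, (a k ^ 2 / 2 + a t ^ 2 / 2) := by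
          rw [Finset.sum_mul]
          exact Finset.sum_le_sum fun k _ => by nlinarith [sq_nonneg (a k - a t)]
      _ ≤ _ := by
          rw [Finset.sum_add_distrib, Finset.sum_const, nsmul_eq_mul]
          gcongr
  calc _ ≤ ∑ t ∈ Finset.range n,
        (∑ k ∈ Finset.Ico (t - s) t, a k ^ 2 / 2 + s * (a t ^ 2 / 2)) :=
        Finset.sum_le_sum fun t _ => hamgm t
    _ ≤ s * ∑ t ∈ Finset.range n, a t ^ 2 / 2 + s * ∑ t ∈ Finset.range n, a t ^ 2 / 2 := by
        rw [Finset.sum_add_distrib, ← Finset.mul_sum]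
        gcongr
        exact sum_range_sum_Ico_sub_le (fun k => by positivity) s n
    _ = _ := by rw [← Finset.sum_div]; ring

theorem sum_sq_le_of_delayed_descent {Φ a : ℕ → ℝ} {α β m : ℝ} {s : ℕ} (hβ : 0 ≤ β)
    (hstep : ∀ t, Φ (t + 1) + α * a t ^ 2 ≤ Φ t + β * ((∑ k ∈ Finset.Ico (t - s) t, a k) * a t))
    (hm : ∀ t, m ≤ Φ t) (n : ℕ) :
    (α - β * s) * ∑ t ∈ Finset.range n, a t ^ 2 ≤ Φ 0 - m := by
  have htelescope : Φ n + α * ∑ t ∈ Finset.range n, a t ^ 2 ≤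
      Φ 0 + β * ∑ t ∈ Finset.range n, (∑ k ∈ Finset.Ico (t - s) t, a k) * a t := by
    induction n with
    | zero => simp
    | succ n ih =>
      simp only [Finset.sum_range_succ, mul_add]
      linarith [hstep n]
  linarith [hm n, mul_le_mul_of_nonneg_left (sum_range_sum_Ico_sub_mul_le a s n) hβ]

section PiLp

variable {ι : Type*} [Fintype ι] {β : ι → Type*} [∀ i, NormedAddCommGroup (β i)]

theorem PiLp.norm_le_norm_of_forall_norm_apply_le {u w : PiLp 2 β} (h : ∀ i, ‖u i‖ ≤ ‖w i‖) :
    ‖u‖ ≤ ‖w‖ := by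
  rw [PiLp.norm_eq_of_L2, PiLp.norm_eq_of_L2]
  gcongr with i
  exact h i

theorem PiLp.sum_norm_apply_le_sqrt_card_mul_norm (u : PiLp 2 β) :
    ∑ i, ‖u i‖ ≤ √(Fintype.card ι) * ‖u‖ := by
  simpa [PiLp.norm_eq_of_L2] using
    Real.sum_mul_le_sqrt_mul_sqrt Finset.univ (fun _ => 1) (fun i => ‖u i‖)

theorem PiLp.norm_sub_le_sum_of_delays (X : ℕ → PiLp 2 β) {σ : ι → ℕ} {s t : ℕ}
    (hσ_le : ∀ j, σ j ≤ t) (hσ_ge : ∀ j, t ≤ σ j + s) {Y : PiLp 2 β}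
    (hY : ∀ j, Y j = X (σ j) j) :
    ‖X t - Y‖ ≤ ∑ k ∈ Finset.Ico (t - s) t, ‖X (k + 1) - X k‖ := by
  -- `Z` runs from `Y` to `X t`, and its step at time `k` only changes blocks that `X` changes.
  let Z : ℕ → PiLp 2 β := fun k => WithLp.toLp 2 fun j => X (max (σ j) k) j
  have hZt : Z t = X t := by ext j; simp [Z, hσ_le j]
  have hZs : Z (t - s) = Y := by ext j; simp [Z, hY, show t - s ≤ σ j by grind]
  have hZstep : ∀ k, dist (Z k) (Z (k + 1)) ≤ dist (X k) (X (k + 1)) := by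
    intro k
    rw [dist_eq_norm, dist_eq_norm]
    refine PiLp.norm_le_norm_of_forall_norm_apply_le fun j => ?_
    rcases le_or_gt (σ j) k with h | h
    · simp [Z, h, h.trans k.le_succ]
    · simp [Z, h.le, Nat.succ_le_of_lt h]
  calc ‖X t - Y‖ = dist (Z (t - s)) (Z t) := by rw [hZt, hZs, dist_comm, dist_eq_norm]
    _ ≤ ∑ k ∈ Finset.Ico (t - s) t, dist (Z k) (Z (k + 1)) :=
        dist_le_Ico_sum_dist Z (Nat.sub_le t s)
    _ ≤ _ := Finset.sum_le_sum fun k _ => by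
        rw [← dist_eq_norm, dist_comm (X _)]; exact hZstep k

variable [∀ i, InnerProductSpace ℝ (β i)]

theorem PiLp.sum_inner_apply_le {z : ι → PiLp 2 β} {C : ℝ} (hC : 0 ≤ C) (hz : ∀ i, ‖z i‖ ≤ C)
    (w : PiLp 2 β) : ∑ i, ⟪z i i, w i⟫_ℝ ≤ √(Fintype.card ι) * C * ‖w‖ :=
  calc ∑ i, ⟪z i i, w i⟫_ℝ ≤ ∑ i, C * ‖w i‖ := Finset.sum_le_sum fun i _ =>
        (real_inner_le_norm _ _).trans <|
          mul_le_mul_of_nonneg_right ((PiLp.norm_apply_le _ i).trans (hz i)) (norm_nonneg _)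
    _ = C * ∑ i, ‖w i‖ := (Finset.mul_sum _ _ _).symm
    _ ≤ C * (√(Fintype.card ι) * ‖w‖) :=
        mul_le_mul_of_nonneg_left (PiLp.sum_norm_apply_le_sqrt_card_mul_norm w) hC
    _ = _ := by ring

theorem PiLp.delayed_block_step_le [∀ i, CompleteSpace (β i)] {f : PiLp 2 β → ℝ}
    {f' : PiLp 2 β → PiLp 2 β} {L η D : ℝ} (hf : ∀ y, HasGradientAt f (f' y) y)
    (hlip : ∀ y z, ‖f' y - f' z‖ ≤ L * ‖y - z‖) (hL : 0 ≤ L) (hD : 0 ≤ D)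
    {u u' : PiLp 2 β} {y : ι → PiLp 2 β} {G G' : ι → ℝ} (hy : ∀ i, ‖u - y i‖ ≤ D)
    (hblock : ∀ i, G' i + 1 / (2 * η) * ‖u' i - u i‖ ^ 2 + ⟪u' i - u i, f' (y i) i⟫_ℝ ≤ G i) :
    f u' + ∑ i, G' i + (1 / (2 * η) - L / 2) * ‖u' - u‖ ^ 2 ≤
      f u + ∑ i, G i + √(Fintype.card ι) * L * (D * ‖u' - u‖) := by
  have hdesc := le_add_inner_add_sq_of_lipschitz_gradient hf hlip u u'
  have hblocks := Finset.sum_le_sum fun i (_ : i ∈ Finset.univ) => hblock i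
  have hcross := PiLp.sum_inner_apply_le (z := fun i => f' u - f' (y i)) (mul_nonneg hL hD)
    (fun i => (hlip _ _).trans (mul_le_mul_of_nonneg_left (hy i) hL)) (u' - u)
  rw [Finset.sum_add_distrib, Finset.sum_add_distrib, ← Finset.mul_sum] at hblocks
  rw [PiLp.inner_apply] at hdesc
  simp only [WithLp.ofLp_sub, Pi.sub_apply, inner_sub_left, Finset.sum_sub_distrib] at hcross hdesc
  have hnorm : ‖u' - u‖ ^ 2 = ∑ i, ‖u' i - u i‖ ^ 2 := by
    simp only [PiLp.norm_sq_eq_of_L2, WithLp.ofLp_sub, Pi.sub_apply]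
  rw [Finset.sum_congr rfl fun i _ => real_inner_comm _ (u' i - u i), ← hnorm] at hblocks
  linarith

end PiLp

theorem EReal.coe_finset_sum {ι : Type*} (s : Finset ι) (v : ι → ℝ) :
    ((∑ i ∈ s, v i : ℝ) : EReal) = ∑ i ∈ s, (v i : EReal) :=
  map_sum (⟨⟨(↑), EReal.coe_zero⟩, EReal.coe_add⟩ : ℝ →+ EReal) v s

theorem EReal.ne_top_of_sum_ne_top {ι : Type*} [DecidableEq ι] {s : Finset ι} {v : ι → EReal}
    (hbot : ∀ i ∈ s, v i ≠ ⊥) (h : ∑ i ∈ s, v i ≠ ⊤) {i : ι} (hi : i ∈ s) : v i ≠ ⊤ := by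
  rw [← Finset.add_sum_erase s v hi] at h
  have hrest : ∑ j ∈ s.erase i, v j ≠ ⊥ :=
    Finset.sum_induction _ (· ≠ ⊥) (fun _ _ ha hb => EReal.add_ne_bot_iff.2 ⟨ha, hb⟩)
      EReal.zero_ne_bot fun j hj => hbot j (Finset.mem_of_mem_erase hj)
  exact ((EReal.add_ne_top_iff_ne_top₂ (hbot i hi) hrest).1 h).1

theorem EReal.ne_top_of_add_coe_le_add_coe {a b : EReal} {r r' : ℝ} (h : a + r ≤ b + r')
    (hb : b ≠ ⊤) : a ≠ ⊤ := by
  rintro rfl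
  rw [EReal.top_add_coe, top_le_iff] at h
  exact EReal.add_ne_top hb (EReal.coe_ne_top r') h

theorem EReal.exists_sInf_range_eq_coe {α : Type*} {F : α → EReal}
    (hbdd : ∃ m : ℝ, ∀ y, (m : EReal) ≤ F y) {a : α} (ha : F a ≠ ⊤) :
    ∃ m : ℝ, sInf (Set.range F) = m := by
  obtain ⟨m, hm⟩ := hbdd
  have hlower : (m : EReal) ≤ sInf (Set.range F) := le_sInf (Set.forall_mem_range.2 hm)
  have hupper : sInf (Set.range F) ≤ F a := sInf_le ⟨a, rfl⟩
  exact ⟨_, (EReal.coe_toReal (ne_top_of_le_ne_top ha hupper)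
    (ne_bot_of_le_ne_bot (EReal.coe_ne_bot m) hlower)).symm⟩

section Prox

variable {E : Type*} [NormedAddCommGroup E] [InnerProductSpace ℝ E] {g : E → EReal} {η : ℝ}

def IsProxGradStep (g : E → EReal) (η : ℝ) (w v u : E) : Prop :=
  ∀ z, g u + ((1 / (2 * η) * ‖u - (w - η • v)‖ ^ 2 : ℝ) : EReal) ≤
    g z + ((1 / (2 * η) * ‖z - (w - η • v)‖ ^ 2 : ℝ) : EReal)

theorem IsProxGradStep.ne_top {w v u : E} (h : IsProxGradStep g η w v u) (hw : g w ≠ ⊤) :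
    g u ≠ ⊤ :=
  EReal.ne_top_of_add_coe_le_add_coe (h w) hw

theorem IsProxGradStep.toReal_add_le {w v u : E} (h : IsProxGradStep g η w v u) (hη : η ≠ 0)
    (hu : g u ≠ ⊥) (hw : g w ≠ ⊥) (hw' : g w ≠ ⊤) :
    (g u).toReal + 1 / (2 * η) * ‖u - w‖ ^ 2 + ⟪u - w, v⟫_ℝ ≤ (g w).toReal := by
  have hcmp := h w
  rw [← EReal.coe_toReal (h.ne_top hw') hu, ← EReal.coe_toReal hw' hw, ← EReal.coe_add,
    ← EReal.coe_add, EReal.coe_le_coe_iff, show u - (w - η • v) = (u - w) + η • v by abel,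
    show w - (w - η • v) = η • v by abel, norm_add_sq_real, real_inner_smul_right] at hcmp
  have hexpand : 1 / (2 * η) * (‖u - w‖ ^ 2 + 2 * (η * ⟪u - w, v⟫_ℝ) + ‖η • v‖ ^ 2) =
      1 / (2 * η) * ‖u - w‖ ^ 2 + ⟪u - w, v⟫_ℝ + 1 / (2 * η) * ‖η • v‖ ^ 2 := by
    field_simp
  linarith

variable {y v : ℕ → E} {T : Set ℕ}

theorem prox_trajectory_ne_top (hskip : ∀ t, t ∉ T → y (t + 1) = y t)
    (hupd : ∀ t ∈ T, IsProxGradStep g η (y t) (v t) (y (t + 1))) (h0 : g (y 0) ≠ ⊤) :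
    ∀ t, g (y t) ≠ ⊤
  | 0 => h0
  | t + 1 => by
    by_cases ht : t ∈ T
    · exact (hupd t ht).ne_top (prox_trajectory_ne_top hskip hupd h0 t)
    · rw [hskip t ht]; exact prox_trajectory_ne_top hskip hupd h0 t

theorem prox_trajectory_toReal_add_le (hskip : ∀ t, t ∉ T → y (t + 1) = y t)
    (hupd : ∀ t ∈ T, IsProxGradStep g η (y t) (v t) (y (t + 1))) (h0 : g (y 0) ≠ ⊤)
    (hη : η ≠ 0) (hbot : ∀ z, g z ≠ ⊥) (t : ℕ) :
    (g (y (t + 1))).toReal + 1 / (2 * η) * ‖y (t + 1) - y t‖ ^ 2 + ⟪y (t + 1) - y t, v t⟫_ℝ ≤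
      (g (y t)).toReal := by
  by_cases ht : t ∈ T
  · exact (hupd t ht).toReal_add_le hη (hbot _) (hbot _) (prox_trajectory_ne_top hskip hupd h0 t)
  · simp [hskip t ht]

end Prox

theorem stmt_4_general
    (p s : ℕ) (d : Fin p → ℕ)
    (τ : Fin p → Fin p → ℕ → ℕ)
    (hτ_le : ∀ i j t, τ i j t ≤ t)
    (hτ_ge : ∀ i j t, t ≤ τ i j t + s)
    (x : (i : Fin p) → ℕ → EuclideanSpace ℝ (Fin (d i)))
    (X : ℕ → EE p d) (hX : ∀ t i, X t i = x i t)
    (Xl : Fin p → ℕ → EE p d) (hXl : ∀ i t j, Xl i t j = x j (τ i j t))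
    (T : Fin p → Set ℕ)
    (η L : ℝ) (hη : 0 < η) (hL : 0 < L)
    (f : EE p d → ℝ) (f' : EE p d → EE p d)
    (hf : ∀ y, HasGradientAt f (f' y) y)
    (hlip : ∀ y z, ‖f' y - f' z‖ ≤ L * ‖y - z‖)
    (g : (i : Fin p) → EuclideanSpace ℝ (Fin (d i)) → EReal)
    (hg_nebot : ∀ i z, g i z ≠ ⊥)
    (F : EE p d → EReal)
    (hF : ∀ y, F y = (f y : EReal) + ∑ i, g i (y i))
    (hF_bdd : ∃ m : ℝ, ∀ y, (m : EReal) ≤ F y)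
    (hF0 : F (X 0) < ⊤)
    (hskip : ∀ i t, t ∉ T i → x i (t + 1) = x i t)
    (hupd : ∀ i t, t ∈ T i → ∀ z : EuclideanSpace ℝ (Fin (d i)),
      g i (x i (t + 1)) +
        ((1 / (2 * η) * ‖x i (t + 1) - (x i t - η • f' (Xl i t) i)‖ ^ 2 : ℝ) : EReal)
      ≤ g i z + ((1 / (2 * η) * ‖z - (x i t - η • f' (Xl i t) i)‖ ^ 2 : ℝ) : EReal))
    (hstep : η < 1 / (L * (1 + 2 * Real.sqrt p * s))) :
    ∀ n : ℕ,
      ∑ t ∈ Finset.range n, ‖X (t + 1) - X t‖ ^ 2 ≤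
        2 / (1 / η - L - 2 * Real.sqrt p * L * s) *
          (F (X 0) - sInf (Set.range F)).toReal := by
  intro n
  have hsum0 : ∑ i, g i (X 0 i) ≠ ⊤ := fun h => by simp [hF, h] at hF0
  have hfin0 : ∀ i, g i (x i 0) ≠ ⊤ := fun i => by
    simpa only [hX] using
      EReal.ne_top_of_sum_ne_top (fun i _ => hg_nebot i _) hsum0 (Finset.mem_univ i)
  set G : ℕ → Fin p → ℝ := fun t i => (g i (x i t)).toReal
  have hG : ∀ t i, g i (x i t) = G t i := fun t i =>
    (EReal.coe_toReal (prox_trajectory_ne_top (hskip i) (hupd i) (hfin0 i) t) (hg_nebot i _)).symm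
  set Φ : ℕ → ℝ := fun t => f (X t) + ∑ i, G t i
  have hFΦ : ∀ t, F (X t) = Φ t := fun t => by
    simp only [hF, hX, hG, Φ, EReal.coe_add, EReal.coe_finset_sum]
  obtain ⟨m, hm⟩ := EReal.exists_sInf_range_eq_coe hF_bdd hF0.ne
  have hmΦ : ∀ t, m ≤ Φ t := fun t => by
    simpa only [hm, hFΦ t, EReal.coe_le_coe_iff] using sInf_le (Set.mem_range_self (f := F) (X t))
  have hdescent : ∀ t, Φ (t + 1) + (1 / (2 * η) - L / 2) * ‖X (t + 1) - X t‖ ^ 2 ≤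
      Φ t + √p * L * ((∑ k ∈ Finset.Ico (t - s) t, ‖X (k + 1) - X k‖) * ‖X (t + 1) - X t‖) := by
    intro t
    simpa [Φ] using PiLp.delayed_block_step_le hf hlip hL.le
      (Finset.sum_nonneg fun k _ => norm_nonneg _)
      (fun i => PiLp.norm_sub_le_sum_of_delays X (hτ_le i · t) (hτ_ge i · t)
        (fun j => by rw [hXl, hX]))
      (fun i => by simpa only [hX] using
        prox_trajectory_toReal_add_le (hskip i) (hupd i) (hfin0 i) hη.ne' (hg_nebot i) t)
  have hbound := sum_sq_le_of_delayed_descent (by positivity) hdescent hmΦ n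
  have hc : 0 < 1 / η - L - 2 * √p * L * s := by
    rw [lt_div_iff₀ (by positivity)] at hstep
    have : L * (1 + 2 * √p * s) < 1 / η := by rw [lt_div_iff₀ hη]; linarith
    linarith
  rw [hFΦ 0, hm, ← EReal.coe_sub, EReal.toReal_coe, div_mul_eq_mul_div, le_div_iff₀ hc]
  linear_combination 2 * hbound

theorem stmt_4
    (p s : ℕ) (hp : 1 ≤ p) (d : Fin p → ℕ) (hd : ∀ i, 1 ≤ d i)
    (τ : Fin p → Fin p → ℕ → ℕ)
    (hτ_le : ∀ i j t, τ i j t ≤ t)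
    (hτ_ge : ∀ i j t, t ≤ τ i j t + s)
    (hτ_self : ∀ i t, τ i i t = t)
    (x : (i : Fin p) → ℕ → EuclideanSpace ℝ (Fin (d i)))
    (X : ℕ → EE p d) (hX : ∀ t i, X t i = x i t)
    (Xl : Fin p → ℕ → EE p d) (hXl : ∀ i t j, Xl i t j = x j (τ i j t))
    (T : Fin p → Set ℕ)
    (hT : ∀ i t, ∃ k ∈ T i, t ≤ k ∧ k ≤ t + s)
    (η L : ℝ) (hη : 0 < η) (hL : 0 < L)
    (f : EE p d → ℝ) (f' : EE p d → EE p d)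
    (hf : ∀ y, HasGradientAt f (f' y) y)
    (hlip : ∀ y z, ‖f' y - f' z‖ ≤ L * ‖y - z‖)
    (g : (i : Fin p) → EuclideanSpace ℝ (Fin (d i)) → EReal)
    (hg_nebot : ∀ i z, g i z ≠ ⊥)
    (hg_proper : ∀ i, ∃ z, g i z ≠ ⊤)
    (hg_lsc : ∀ i, LowerSemicontinuous (g i))
    (F : EE p d → EReal)
    (hF : ∀ y, F y = (f y : EReal) + ∑ i, g i (y i))
    (hF_bdd : ∃ m : ℝ, ∀ y, (m : EReal) ≤ F y)
    (hF0 : F (X 0) < ⊤)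
    (hskip : ∀ i t, t ∉ T i → x i (t + 1) = x i t)
    (hupd : ∀ i t, t ∈ T i → ∀ z : EuclideanSpace ℝ (Fin (d i)),
      g i (x i (t + 1)) +
        ((1 / (2 * η) * ‖x i (t + 1) - (x i t - η • f' (Xl i t) i)‖ ^ 2 : ℝ) : EReal)
      ≤ g i z + ((1 / (2 * η) * ‖z - (x i t - η • f' (Xl i t) i)‖ ^ 2 : ℝ) : EReal))
    (hstep : η < 1 / (L * (1 + 2 * Real.sqrt p * s))) :
    ∀ n : ℕ,
      ∑ t ∈ Finset.range n, ‖X (t + 1) - X t‖ ^ 2 ≤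
        2 / (1 / η - L - 2 * Real.sqrt p * L * s) *
          (F (X 0) - sInf (Set.range F)).toReal :=
  stmt_4_general p s d τ hτ_le hτ_ge x X hX Xl hXl T η L hη hL f f' hf hlip g hg_nebot F hF hF_bdd
    hF0 hskip hupd hstep
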